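/- Let E be a row-finite directed graph with no sources, n ≥ 1, and v, w vertices of E (regarded as length-zero vertices of E(n)). Then there is a path in E(n) from w to v if and only if there is a path in E from w to v whose length is a multiple of n. -/

import Mathlib

/-- A directed graph: vertices, edges, range and source maps. -/
structure DGraph where
  V : Type
  E : Type
  r : E → V
  s : E → V

namespace DGraph

variable {G : DGraph}

/-- A path in a directed graph: a word of composable edges together with a source vertex
(so that length-zero paths are vertices). -/
structure Path (G : DGraph) where
  src : G.V
  edges : List G.E
  chain : List.Chain' (fun a b => G.s a = G.r b) edges
  srcEq : ∀ a ∈ edges.getLast?, G.s a = src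

/-- The range of a path. -/
def Path.rng (p : G.Path) : G.V := p.edges.head?.elim p.src G.r

/-- The length of a path. -/
def Path.length (p : G.Path) : ℕ := p.edges.length

/-- The length-zero path at a vertex. -/
def Path.nil (G : DGraph) (v : G.V) : G.Path :=
  ⟨v, [], List.isChain_nil, by simp⟩

@[simp] theorem Path.length_nil (v : G.V) : (Path.nil G v).length = 0 := rfl

/-- Prepend an edge to a path. -/
def Path.cons (e : G.E) (p : G.Path) (h : p.rng = G.s e) : G.Path where
  src := p.src
  edges := e :: p.edges
  chain := by
    rw [List.Chain', List.isChain_cons]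
    refine ⟨fun b hb => ?_, p.chain⟩
    rw [← h]
    simp [Path.rng, Option.mem_def.mp hb]
  srcEq := by
    intro a ha
    cases hp : p.edges with
    | nil =>
      rw [hp] at ha
      simp only [List.getLast?_singleton, Option.mem_def, Option.some.injEq] at ha
      subst ha
      have h0 : p.rng = p.src := by simp [Path.rng, hp]
      rw [← h, h0]
    | cons f t =>
      apply p.srcEq
      rw [hp]
      rw [hp, List.getLast?_cons_cons] at ha
      exact ha

@[simp] theorem Path.length_cons (e : G.E) (p : G.Path) (h : p.rng = G.s e) :
    (Path.cons e p h).length = p.length + 1 := rfl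

/-- Remove the first edge of a path. -/
def Path.tail (p : G.Path) : G.Path where
  src := p.src
  edges := p.edges.tail
  chain := p.chain.tail
  srcEq := by
    intro a ha
    apply p.srcEq
    cases hp : p.edges with
    | nil => rw [hp] at ha; simp at ha
    | cons f t =>
      rw [hp] at ha
      simp only [List.tail_cons] at ha
      cases t with
      | nil => simp at ha
      | cons g u => rw [List.getLast?_cons_cons]; exact ha

@[simp] theorem Path.length_tail (p : G.Path) : p.tail.length = p.length - 1 := by
  simp [Path.tail, Path.length]

/-- The initial segment of a path consisting of its first `k` edges. -/
def Path.take (p : G.Path) (k : ℕ) : G.Path where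
  src := (p.edges.drop k).head?.elim p.src G.r
  edges := p.edges.take k
  chain := p.chain.take k
  srcEq := by
    intro a ha
    have hc : List.Chain' (fun a b => G.s a = G.r b) (p.edges.take k ++ p.edges.drop k) := by
      rw [List.take_append_drop]; exact p.chain
    rw [List.Chain', List.isChain_append] at hc
    obtain ⟨-, -, hadj⟩ := hc
    cases hd : p.edges.drop k with
    | nil =>
      have htake : p.edges.take k = p.edges := by
        have h1 := List.take_append_drop k p.edges
        rw [hd, List.append_nil] at h1
        exact h1
      simp only [List.head?_nil, Option.elim]
      exact p.srcEq a (htake ▸ ha)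
    | cons f t =>
      simp only [List.head?_cons, Option.elim]
      exact hadj a ha f (by rw [hd]; simp)

/-- `[μ]_n` : the initial segment of `μ` of length `|μ| mod n`. -/
def Path.trunc (m : ℕ) (p : G.Path) : G.Path := p.take (p.length % m)

/-- Concatenation of paths, `p` followed after `q` (so `p.append q` has range the range of `p`
and source the source of `q`). -/
def Path.append (p q : G.Path) (h : p.src = q.rng) : G.Path where
  src := q.src
  edges := p.edges ++ q.edges
  chain := by
    rw [List.Chain', List.isChain_append]
    refine ⟨p.chain, q.chain, fun a ha b hb => ?_⟩
    rw [p.srcEq a ha, h]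
    simp [Path.rng, Option.mem_def.mp hb]
  srcEq := by
    intro a ha
    cases hq : q.edges with
    | nil =>
      rw [hq, List.append_nil] at ha
      have h0 : q.rng = q.src := by simp [Path.rng, hq]
      rw [p.srcEq a ha, h, h0]
    | cons f t =>
      apply q.srcEq
      rw [hq]
      rw [hq, List.getLast?_append_cons] at ha
      exact ha

/-- A graph is row-finite if every vertex receives finitely many edges. -/
def RowFinite (G : DGraph) : Prop := ∀ v : G.V, {e : G.E | G.r e = v}.Finite

/-- A graph has no sources if every vertex receives an edge. -/
def NoSources (G : DGraph) : Prop := ∀ v : G.V, ∃ e : G.E, G.r e = v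

/-- A graph is strongly connected if for all vertices `v, w` there is a path from `w` to `v`. -/
def StronglyConnected (G : DGraph) : Prop :=
  ∀ v w : G.V, ∃ p : G.Path, p.src = w ∧ p.rng = v

/-- The set of paths of length less than `n`. -/
abbrev PathLt (G : DGraph) (n : ℕ) := {p : G.Path // p.length < n}

/-- The graph `E(n)` of Kribs and Solel: vertices are paths of length `< n`, and edges
are pairs `(e, μ)` with `r(μ) = s(e)` and `|μ| < n`, with source `μ` and range `[eμ]_n`. -/
def Eln (G : DGraph) (n : ℕ) : DGraph where
  V := PathLt G n
  E := {q : G.E × G.Path // q.2.length + 1 ≤ n ∧ q.2.rng = G.s q.1}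
  s := fun q => ⟨q.1.2, Nat.lt_of_succ_le q.2.1⟩
  r := fun q =>
    if h : q.1.2.length + 1 < n then
      ⟨Path.cons q.1.1 q.1.2 q.2.2, by simpa using h⟩
    else
      ⟨Path.nil G (G.r q.1.1), Nat.lt_of_lt_of_le (Nat.succ_pos _) q.2.1⟩

/-- A vertex of `E`, regarded as a length-zero vertex of `E(n)`. -/
def vtx (G : DGraph) (n : ℕ) (hn : 0 < n) (v : G.V) : PathLt G n :=
  ⟨Path.nil G v, by simpa using hn⟩

/-- `d` is the greatest common divisor of the set `S` of natural numbers. -/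
def IsGCDOf (d : ℕ) (S : Set ℕ) : Prop :=
  (∀ k ∈ S, d ∣ k) ∧ ∀ c : ℕ, (∀ k ∈ S, c ∣ k) → c ∣ d

/-- The set of lengths of (nonempty) cycles of `G`. -/
def CycleLengths (G : DGraph) : Set ℕ :=
  {k | ∃ p : G.Path, p.rng = p.src ∧ p.edges ≠ [] ∧ p.length = k}

/-- The set of lengths of (nonempty) cycles of `G` based at `v`. -/
def CycleLengthsAt (G : DGraph) (v : G.V) : Set ℕ :=
  {k | ∃ p : G.Path, p.src = v ∧ p.rng = v ∧ p.edges ≠ [] ∧ p.length = k}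

/-- The relation `v ∼ w` iff there is a path from `w` to `v` whose length is divisible by `d`. -/
def SimRel (G : DGraph) (d : ℕ) (v w : G.V) : Prop :=
  ∃ p : G.Path, p.src = w ∧ p.rng = v ∧ d ∣ p.length

/-- The connected-component relation of a graph: the smallest equivalence relation
identifying the range and the source of each edge. -/
def Comp (G : DGraph) : G.V → G.V → Prop :=
  Relation.EqvGen (fun a b => ∃ f : G.E, G.r f = a ∧ G.s f = b)

/-- The adjacency matrix of `E(n)` acting on vectors indexed by `E^{<n}`. -/
noncomputable def Aact (G : DGraph) (n : ℕ) (g : PathLt G n → ℝ) (v : PathLt G n) : ℝ :=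
  ∑ᶠ (f : (Eln G n).E) (_ : (Eln G n).r f = v), g ((Eln G n).s f)

/-- The pushforward of a vector on `E^{<n}` along `ν ↦ [ν]_m`. -/
noncomputable def pushf (G : DGraph) (n m : ℕ) (g : PathLt G n → ℝ) (μ : PathLt G m) : ℝ :=
  ∑ᶠ (ν : PathLt G n) (_ : Path.trunc m ν.1 = μ.1), g ν

instance : TopologicalSpace G.Path := ⊥

/-- The inverse limit `lim← E^{<n_k}` along the truncation maps. -/
def InvLim (G : DGraph) (n : ℕ → ℕ) : Type :=
  {f : (k : ℕ) → PathLt G (n k) // ∀ k, Path.trunc (n k) (f (k+1)).1 = (f k).1}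

instance (G : DGraph) (n : ℕ → ℕ) : TopologicalSpace (InvLim G n) :=
  inferInstanceAs (TopologicalSpace
    {f : (k : ℕ) → PathLt G (n k) // ∀ k, Path.trunc (n k) (f (k+1)).1 = (f k).1})

noncomputable instance (G : DGraph) (n : ℕ → ℕ) : MeasurableSpace (InvLim G n) := borel _

/-! Since the range of the edge `(e, [p]_n)` of `E(n)` is `[e p]_n`, a path of `E(n)` starting at
the vertex `w` is the same as a path `p` of `E` starting at `w`, read edge by edge, and it ends
at `[p]_n`. That endpoint is the vertex `v` exactly when `n ∣ |p|` and `r(p) = v`. -/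

theorem Path.ext {p q : G.Path} (hsrc : p.src = q.src) (hedges : p.edges = q.edges) : p = q := by
  cases p; cases q; cases hsrc; cases hedges; rfl

theorem Path.eq_nil_of_edges_eq_nil {p : G.Path} (h : p.edges = []) : p = Path.nil G p.src :=
  Path.ext rfl h

theorem Path.rng_tail_of_edges_eq_cons {p : G.Path} {e : G.E} {rest : List G.E}
    (hp : p.edges = e :: rest) : p.tail.rng = G.s e := by
  cases rest with
  | nil => simp [Path.tail, Path.rng, hp, p.srcEq e (by simp [hp])]
  | cons f t =>
    have hchain := p.chain
    rw [hp, List.Chain', List.isChain_cons_cons] at hchain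
    simp [Path.tail, Path.rng, hp, hchain.1]

theorem Path.cons_tail_of_edges_eq_cons {p : G.Path} {e : G.E} {rest : List G.E}
    (hp : p.edges = e :: rest) : Path.cons e p.tail (p.rng_tail_of_edges_eq_cons hp) = p :=
  Path.ext rfl (by simp [Path.cons, Path.tail, hp])

@[elab_as_elim]
theorem Path.consInduction {motive : G.Path → Prop} (nil : ∀ v, motive (Path.nil G v))
    (cons : ∀ e p (h : p.rng = G.s e), motive p → motive (Path.cons e p h)) (p : G.Path) :
    motive p := by
  induction hp : p.edges generalizing p with
  | nil => rw [Path.eq_nil_of_edges_eq_nil hp]; exact nil _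
  | cons e rest ih =>
    rw [← Path.cons_tail_of_edges_eq_cons hp]
    exact cons _ _ _ (ih p.tail (by simp [Path.tail, hp]))

theorem Path.take_zero (p : G.Path) : p.take 0 = Path.nil G p.rng := by
  apply Path.ext <;> simp [Path.take, Path.nil, Path.rng]

theorem Path.rng_take (p : G.Path) (k : ℕ) : (p.take k).rng = p.rng := by
  cases k with
  | zero => rw [Path.take_zero]; rfl
  | succ k => cases hp : p.edges <;> simp [Path.take, Path.rng, hp]

theorem Path.length_trunc (n : ℕ) (p : G.Path) : (p.trunc n).length = p.length % n := by
  simp [Path.trunc, Path.take, Path.length, Nat.mod_le]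

theorem Path.rng_trunc (n : ℕ) (p : G.Path) : (p.trunc n).rng = p.rng :=
  p.rng_take _

theorem Path.trunc_eq_nil_iff {n : ℕ} {p : G.Path} {v : G.V} :
    p.trunc n = Path.nil G v ↔ n ∣ p.length ∧ p.rng = v := by
  constructor
  · intro h
    refine ⟨Nat.dvd_of_mod_eq_zero ?_, ?_⟩
    · simpa [Path.length_trunc] using congrArg Path.length h
    · exact (Path.rng_trunc n p).symm.trans (congrArg Path.rng h)
  · rintro ⟨hdvd, rfl⟩
    rw [Path.trunc, Nat.mod_eq_zero_of_dvd hdvd, Path.take_zero]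

theorem Path.trunc_nil (n : ℕ) (v : G.V) : (Path.nil G v).trunc n = Path.nil G v :=
  Path.trunc_eq_nil_iff.2 ⟨dvd_zero n, rfl⟩

theorem Eln.r_val_mk_trunc {n : ℕ} (e : G.E) (p : G.Path) (hr : p.rng = G.s e)
    (hle : (p.trunc n).length + 1 ≤ n) (hrng : (p.trunc n).rng = G.s e) :
    ((Eln G n).r ⟨(e, p.trunc n), hle, hrng⟩).1 = (Path.cons e p hr).trunc n := by
  rw [Path.length_trunc] at hle
  dsimp only [Eln]
  split_ifs with hlt
  · rw [Path.length_trunc] at hlt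
    have hmod : (p.length + 1) % n = p.length % n + 1 := by
      rw [Nat.add_mod, Nat.mod_eq_of_lt (by omega : 1 < n), Nat.mod_eq_of_lt hlt]
    simp only [Path.trunc, Path.length_cons, hmod]
    rfl
  · have hdvd : n ∣ (Path.cons e p hr).length := by
      rw [Path.length_trunc] at hlt
      refine ⟨p.length / n + 1, ?_⟩
      have := Nat.div_add_mod p.length n
      rw [Path.length_cons, Nat.mul_add]
      omega
    exact (Path.trunc_eq_nil_iff.2 ⟨hdvd, rfl⟩).symm

theorem exists_path_of_eln_path {n : ℕ} (hn : 0 < n) {w : G.V} (P : Path (Eln G n))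
    (hP : P.src = vtx G n hn w) : ∃ p : G.Path, p.src = w ∧ P.rng.1 = p.trunc n := by
  induction P using Path.consInduction with
  | nil u =>
    subst hP
    exact ⟨Path.nil G w, rfl, (Path.trunc_nil n w).symm⟩
  | cons f P hf ih =>
    obtain ⟨⟨e, μ⟩, hle, hrng⟩ := f
    obtain ⟨p, hp, hPp⟩ := ih hP
    have hμ : μ = p.trunc n := (congrArg Subtype.val hf).symm.trans hPp
    subst hμ
    have hr : p.rng = G.s e := (Path.rng_trunc n p).symm.trans hrng
    exact ⟨Path.cons e p hr, hp, Eln.r_val_mk_trunc e p hr hle hrng⟩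

theorem exists_eln_path_of_path {n : ℕ} (hn : 0 < n) (p : G.Path) :
    ∃ P : Path (Eln G n), P.src = vtx G n hn p.src ∧ P.rng.1 = p.trunc n := by
  induction p using Path.consInduction with
  | nil v =>
    exact ⟨Path.nil _ (vtx G n hn v), rfl, (Path.trunc_nil n v).symm⟩
  | cons e p hr ih =>
    obtain ⟨P, hP, hPp⟩ := ih
    have hle : (p.trunc n).length + 1 ≤ n := by rw [Path.length_trunc]; exact Nat.mod_lt _ hn
    have hrng : (p.trunc n).rng = G.s e := (Path.rng_trunc n p).trans hr
    exact ⟨Path.cons ⟨(e, p.trunc n), hle, hrng⟩ P (Subtype.ext hPp), hP,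
      Eln.r_val_mk_trunc e p hr hle hrng⟩

end DGraph

open DGraph in
theorem Eln_connectivity_general (G : DGraph) (n : ℕ) (hn : 0 < n) (v w : G.V) :
    (∃ P : Path (Eln G n), P.src = vtx G n hn w ∧ P.rng = vtx G n hn v) ↔
    (∃ p : G.Path, p.src = w ∧ p.rng = v ∧ n ∣ p.length) := by
  constructor
  · rintro ⟨P, hPw, hPv⟩
    obtain ⟨p, hpw, hPp⟩ := exists_path_of_eln_path hn P hPw
    have hp : p.trunc n = Path.nil G v := by rw [← hPp, hPv]; rfl
    obtain ⟨hdvd, hpv⟩ := Path.trunc_eq_nil_iff.1 hp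
    exact ⟨p, hpw, hpv, hdvd⟩
  · rintro ⟨p, rfl, hpv, hdvd⟩
    obtain ⟨P, hPw, hPp⟩ := exists_eln_path_of_path hn p
    exact ⟨P, hPw, Subtype.ext (hPp.trans (Path.trunc_eq_nil_iff.2 ⟨hdvd, hpv⟩))⟩

open DGraph in
/-- For a row-finite directed graph `E` with no sources, `n ≥ 1` and
vertices `v, w` of `E` (regarded as length-zero vertices of `E(n)`), there is a path in
`E(n)` from `w` to `v` if and only if there is a path in `E` from `w` to `v` whose length is
a multiple of `n`. -/
theorem Eln_connectivity (G : DGraph) (hrf : RowFinite G) (hns : NoSources G)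
    (n : ℕ) (hn : 0 < n) (v w : G.V) :
    (∃ P : Path (Eln G n), P.src = vtx G n hn w ∧ P.rng = vtx G n hn v) ↔
    (∃ p : G.Path, p.src = w ∧ p.rng = v ∧ n ∣ p.length) :=
  Eln_connectivity_general G n hn v w
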